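/- arXiv:2410.20784 — 3 statements merged into one kernel-verified Lean document; each statement's English description precedes it below -/
import Mathlib

section
/- Let S be a bounded linear operator on a Hilbert space X and suppose ⟪Sv, v⟫ ≥ −c₀‖v‖² for all v ∈ X, where c₀ ≥ 0. If τ > 0 and τc₀/2 < 1, then P₊ = I + (τ/2)S is invertible, ‖P₊⁻¹‖ ≤ (1 − τc₀/2)⁻¹, and the operator P = P₊⁻¹(I − (τ/2)S) satisfies ‖Pv‖ ≤ (1 + τc₀/2)/(1 − τc₀/2)·‖v‖ ≤ e^{2τc₀/(2−τc₀)}‖v‖ for all v ∈ X. -/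
/-!
The operator `P₊ = I + (τ/2)S` is coercive with constant `1 - τc₀/2`, so Lax–Milgram inverts it
with `‖P₊⁻¹‖ ≤ (1 - τc₀/2)⁻¹`. Since `P₊` and `P₋ = I - (τ/2)S` commute, `P v = P₋ u` with
`u = P₊⁻¹ v`, and the parallelogram-type identity `‖u - w‖² = ‖u + w‖² - 4⟪w, u⟫` for `w = (τ/2)Su`
gives `‖P₋ u‖² ≤ ‖P₊ u‖² + 2τc₀‖u‖²`; bounding `‖u‖` by `‖P₊ u‖ / (1 - τc₀/2)` yields the
Cayley-transform bound, and `1 + y ≤ eʸ` the exponential one.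
-/

open scoped RealInnerProductSpace

section Coercive

variable {X : Type*} [NormedAddCommGroup X] [InnerProductSpace ℝ X]

theorem mul_norm_le_norm_apply_of_coercive {A : X →L[ℝ] X} {m : ℝ}
    (hA : ∀ v, m * ‖v‖ ^ 2 ≤ ⟪A v, v⟫) (v : X) : m * ‖v‖ ≤ ‖A v‖ := by
  rcases eq_or_ne v 0 with rfl | hv
  · simp
  refine le_of_mul_le_mul_right ?_ (norm_pos_iff.mpr hv)
  calc m * ‖v‖ * ‖v‖ = m * ‖v‖ ^ 2 := by ring
    _ ≤ ⟪A v, v⟫ := hA v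
    _ ≤ ‖A v‖ * ‖v‖ := real_inner_le_norm _ _

theorem exists_continuousLinearEquiv_of_coercive [CompleteSpace X] (A : X →L[ℝ] X) {m : ℝ}
    (hm : 0 < m) (hA : ∀ v, m * ‖v‖ ^ 2 ≤ ⟪A v, v⟫) :
    ∃ e : X ≃L[ℝ] X, (e : X →L[ℝ] X) = A ∧ ‖(e.symm : X →L[ℝ] X)‖ ≤ m⁻¹ := by
  have hB : IsCoercive ((innerSL ℝ).comp A) :=
    ⟨m, hm, fun v => by simpa [sq, mul_assoc] using hA v⟩
  set e := hB.continuousLinearEquivOfBilin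
  have he : (e : X →L[ℝ] X) = A := by
    ext v
    refine ext_inner_right ℝ fun w => ?_
    simp [e]
  refine ⟨e, he, ContinuousLinearMap.opNorm_le_bound _ (inv_nonneg.mpr hm.le) fun v => ?_⟩
  rw [le_inv_mul_iff₀ hm]
  simpa [← he] using mul_norm_le_norm_apply_of_coercive hA (e.symm v)

end Coercive

section CayleyTransform

variable {X : Type*} [NormedAddCommGroup X] [InnerProductSpace ℝ X]
  (S : X →L[ℝ] X) {c t : ℝ}

theorem id_add_smul_comp_id_sub_smul (t : ℝ) :
    (ContinuousLinearMap.id ℝ X + t • S).comp (ContinuousLinearMap.id ℝ X - t • S) =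
      (ContinuousLinearMap.id ℝ X - t • S).comp (ContinuousLinearMap.id ℝ X + t • S) := by
  ext v
  simp only [ContinuousLinearMap.comp_apply, add_apply, sub_apply, ContinuousLinearMap.id_apply,
    smul_apply, map_add, map_sub, map_smul]
  module

theorem coercive_id_add_smul (hS : ∀ v : X, ⟪S v, v⟫ ≥ -c * ‖v‖ ^ 2) (ht : 0 ≤ t) (v : X) :
    (1 - t * c) * ‖v‖ ^ 2 ≤ ⟪(ContinuousLinearMap.id ℝ X + t • S) v, v⟫ := by
  have hSv := mul_le_mul_of_nonneg_left (hS v) ht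
  simp only [add_apply, ContinuousLinearMap.id_apply, smul_apply, inner_add_left,
    real_inner_smul_left, real_inner_self_eq_norm_sq]
  linarith

theorem norm_id_sub_smul_apply_sq_le (hS : ∀ v : X, ⟪S v, v⟫ ≥ -c * ‖v‖ ^ 2) (ht : 0 ≤ t)
    (v : X) :
    ‖(ContinuousLinearMap.id ℝ X - t • S) v‖ ^ 2 ≤
      ‖(ContinuousLinearMap.id ℝ X + t • S) v‖ ^ 2 + 4 * (t * c) * ‖v‖ ^ 2 := by
  have hSv := mul_le_mul_of_nonneg_left (hS v) ht
  simp only [add_apply, sub_apply, ContinuousLinearMap.id_apply, smul_apply, norm_sub_sq_real,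
    norm_add_sq_real, real_inner_smul_right, real_inner_comm (S v) v]
  linarith

theorem norm_id_sub_smul_apply_le (hS : ∀ v : X, ⟪S v, v⟫ ≥ -c * ‖v‖ ^ 2) (hc : 0 ≤ c)
    (ht : 0 ≤ t) (htc : t * c < 1) (v : X) :
    ‖(ContinuousLinearMap.id ℝ X - t • S) v‖ ≤
      (1 + t * c) / (1 - t * c) * ‖(ContinuousLinearMap.id ℝ X + t • S) v‖ := by
  set a := t * c
  set w := ‖(ContinuousLinearMap.id ℝ X + t • S) v‖
  have ha : 0 ≤ a := mul_nonneg ht hc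
  have hpos : 0 < 1 - a := by linarith
  have hv : ‖v‖ ≤ w / (1 - a) := by
    rw [le_div_iff₀ hpos, mul_comm]
    exact mul_norm_le_norm_apply_of_coercive (coercive_id_add_smul S hS ht) v
  refine le_of_sq_le_sq ?_ (by positivity)
  calc ‖(ContinuousLinearMap.id ℝ X - t • S) v‖ ^ 2 ≤ w ^ 2 + 4 * a * ‖v‖ ^ 2 :=
        norm_id_sub_smul_apply_sq_le S hS ht v
    _ ≤ w ^ 2 + 4 * a * (w / (1 - a)) ^ 2 := by gcongr
    _ = ((1 + a) / (1 - a) * w) ^ 2 := by field_simp; ring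

end CayleyTransform

theorem one_add_half_div_one_sub_half_le_exp {x : ℝ} (hx : x < 2) :
    (1 + x / 2) / (1 - x / 2) ≤ Real.exp (2 * x / (2 - x)) := by
  have h : (1 + x / 2) / (1 - x / 2) = 2 * x / (2 - x) + 1 := by
    field_simp [show (2 - x) ≠ 0 by linarith]
    ring
  rw [h]
  exact Real.add_one_le_exp _

/-- P₊ = I + (τ/2)S is invertible with ‖P₊⁻¹‖ ≤ (1 − τc₀/2)⁻¹ and
P = P₊⁻¹(I − (τ/2)S) satisfies ‖Pv‖ ≤ (1+τc₀/2)/(1−τc₀/2)‖v‖ ≤ e^{2τc₀/(2−τc₀)}‖v‖. -/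
theorem stmt_2 {X : Type*} [NormedAddCommGroup X] [InnerProductSpace ℝ X] [CompleteSpace X]
    (S : X →L[ℝ] X) (c₀ : ℝ) (hc₀ : 0 ≤ c₀)
    (hmono : ∀ v : X, ⟪S v, v⟫ ≥ -c₀ * ‖v‖ ^ 2)
    (τ : ℝ) (hτ : 0 < τ) (hτc : τ * c₀ < 2) :
    ∃ Pinv : X →L[ℝ] X,
      Pinv.comp (ContinuousLinearMap.id ℝ X + (τ / 2) • S) = ContinuousLinearMap.id ℝ X ∧
      (ContinuousLinearMap.id ℝ X + (τ / 2) • S).comp Pinv = ContinuousLinearMap.id ℝ X ∧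
      ‖Pinv‖ ≤ (1 - τ * c₀ / 2)⁻¹ ∧
      (∀ v : X,
        ‖Pinv ((ContinuousLinearMap.id ℝ X - (τ / 2) • S) v)‖ ≤
          (1 + τ * c₀ / 2) / (1 - τ * c₀ / 2) * ‖v‖ ∧
        (1 + τ * c₀ / 2) / (1 - τ * c₀ / 2) * ‖v‖ ≤
          Real.exp (2 * τ * c₀ / (2 - τ * c₀)) * ‖v‖) := by
  set Pp := ContinuousLinearMap.id ℝ X + (τ / 2) • S
  set Pm := ContinuousLinearMap.id ℝ X - (τ / 2) • S
  have ht : 0 ≤ τ / 2 := by positivity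
  have hta : τ / 2 * c₀ = τ * c₀ / 2 := div_mul_eq_mul_div τ 2 c₀
  have hcoer := coercive_id_add_smul S hmono ht
  rw [hta] at hcoer
  obtain ⟨e, he, he_symm⟩ :=
    exists_continuousLinearEquiv_of_coercive Pp (by linarith) hcoer
  have hPp : ∀ x, e x = Pp x := fun x => by rw [← he]; rfl
  have hcomm : ∀ v, e.symm (Pm v) = Pm (e.symm v) := fun v => e.injective <| calc
    e (e.symm (Pm v)) = Pm (Pp (e.symm v)) := by rw [e.apply_symm_apply, ← hPp, e.apply_symm_apply]
    _ = Pp (Pm (e.symm v)) := (DFunLike.congr_fun (id_add_smul_comp_id_sub_smul S _) _).symm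
    _ = e (Pm (e.symm v)) := (hPp _).symm
  refine ⟨e.symm, he ▸ e.coe_symm_comp_coe, he ▸ e.coe_comp_coe_symm, he_symm, fun v => ⟨?_, ?_⟩⟩
  · have h := norm_id_sub_smul_apply_le S hmono hc₀ ht (by linarith) (e.symm v)
    rw [hta] at h
    change ‖Pm (e.symm v)‖ ≤ _ * ‖Pp (e.symm v)‖ at h
    rwa [← hcomm, ← hPp, e.apply_symm_apply] at h
  · rw [mul_assoc]
    exact mul_le_mul_of_nonneg_right (one_add_half_div_one_sub_half_le_exp hτc) (norm_nonneg v)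
end

section
/- With the notation of the block inverse formula, the stability matrix P = P₊⁻¹P₋ with P₋ = [[I, τ/2·I], [−τ/2·A, I − τ/2·B]] satisfies P = [[−I + Q₊⁻¹(2I + τB), τQ₊⁻¹], [−(4/τ)I + (2/τ)Q₊⁻¹(2I + τB), −I + 2Q₊⁻¹]] as operators on H × H. -/
/-!
Write `Q₊ = I + (τ²/4)A + (τ/2)B`. Since `Pinv` is a left inverse of `P₊`, it suffices to check that `P₊` maps the
claimed block image of `(u, v)` to `P₋(u, v)`. The first row of this identity is a scalar identity.
For the second, the claimed second component is `v' = (2/τ)(u' - u) - v`, where `u'` is the first,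
so the second row of `P₊(u', v')` equals `(2/τ)Q₊u' - (2/τ)u - v - Bu - (τ/2)Bv`, and `Q₊u'` is
known from `Q₊Q₊⁻¹ = I`.
-/

noncomputable section

namespace CrankNicolson

variable {H : Type*} [AddCommGroup H] [Module ℝ H]

/-- The operator `P₊`. -/
def plusOp (A B : H →ₗ[ℝ] H) (τ : ℝ) (x : H × H) : H × H :=
  (x.1 - (τ / 2) • x.2, (τ / 2) • A x.1 + x.2 + (τ / 2) • B x.2)

/-- The operator `P₋`. -/
def minusOp (A B : H →ₗ[ℝ] H) (τ : ℝ) (x : H × H) : H × H :=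
  (x.1 + (τ / 2) • x.2, -((τ / 2) • A x.1) + x.2 - (τ / 2) • B x.2)

/-- The block matrix `[[-I + Q₊⁻¹(2I + τB), τQ₊⁻¹], [-(4/τ)I + (2/τ)Q₊⁻¹(2I + τB), -I + 2Q₊⁻¹]]`,
with `Qinv` standing for `Q₊⁻¹`. -/
def blockOp (B Qinv : H →ₗ[ℝ] H) (τ : ℝ) (x : H × H) : H × H :=
  (-x.1 + Qinv ((2:ℝ) • x.1 + τ • B x.1) + τ • Qinv x.2,
   (-(4 / τ)) • x.1 + (2 / τ) • Qinv ((2:ℝ) • x.1 + τ • B x.1) + (-x.2 + (2:ℝ) • Qinv x.2))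

theorem plusOp_blockOp {A B Qinv : H →ₗ[ℝ] H} {τ : ℝ} (hτ : τ ≠ 0)
    (hQ : ∀ w : H, Qinv w + (τ ^ 2 / 4) • A (Qinv w) + (τ / 2) • B (Qinv w) = w) (x : H × H) :
    plusOp A B τ (blockOp B Qinv τ x) = minusOp A B τ x := by
  obtain ⟨u, v⟩ := x
  have ha := hQ ((2:ℝ) • u + τ • B u)
  have hb := hQ v
  simp only [plusOp, minusOp, blockOp, map_add, map_smul, map_neg] at ha hb ⊢
  ext
  · match_scalars <;> field_simp <;> ring
  · linear_combination (norm := match_scalars <;> field_simp <;> ring)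
      (2 / τ : ℝ) • ha + (2:ℝ) • hb

end CrankNicolson

end

theorem stmt_12_general {H : Type*} [AddCommGroup H] [Module ℝ H]
    (A B : H →ₗ[ℝ] H) (τ : ℝ) (hτ : 0 < τ)
    (Qinv : H →ₗ[ℝ] H)
    (hQ₂ : ∀ w : H, Qinv w + (τ ^ 2 / 4) • A (Qinv w) + (τ / 2) • B (Qinv w) = w)
    (Pinv : H × H → H × H)
    (hPinv₁ : ∀ u v : H,
      Pinv (u - (τ / 2) • v, (τ / 2) • A u + v + (τ / 2) • B v) = (u, v)) :
    ∀ u v : H,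
      Pinv (u + (τ / 2) • v, -((τ / 2) • A u) + v - (τ / 2) • B v) =
        (-u + Qinv ((2:ℝ) • u + τ • B u) + τ • Qinv v,
         (-(4 / τ)) • u + (2 / τ) • Qinv ((2:ℝ) • u + τ • B u) + (-v + (2:ℝ) • Qinv v)) := by
  intro u v
  show Pinv (CrankNicolson.minusOp A B τ (u, v)) = CrankNicolson.blockOp B Qinv τ (u, v)
  rw [← CrankNicolson.plusOp_blockOp hτ.ne' hQ₂]
  exact hPinv₁ _ _

/-- explicit block form of the stability operator P = P₊⁻¹P₋. -/
theorem stmt_12 {H : Type*} [AddCommGroup H] [Module ℝ H]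
    (A B : H →ₗ[ℝ] H) (τ : ℝ) (hτ : 0 < τ)
    (Qinv : H →ₗ[ℝ] H)
    (hQ₁ : ∀ w : H, Qinv (w + (τ ^ 2 / 4) • A w + (τ / 2) • B w) = w)
    (hQ₂ : ∀ w : H, Qinv w + (τ ^ 2 / 4) • A (Qinv w) + (τ / 2) • B (Qinv w) = w)
    (Pinv : H × H → H × H)
    (hPinv₁ : ∀ u v : H,
      Pinv (u - (τ / 2) • v, (τ / 2) • A u + v + (τ / 2) • B v) = (u, v))
    (hPinv₂ : ∀ u v : H,
      ((Pinv (u, v)).1 - (τ / 2) • (Pinv (u, v)).2,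
        (τ / 2) • A (Pinv (u, v)).1 + (Pinv (u, v)).2 + (τ / 2) • B (Pinv (u, v)).2) = (u, v)) :
    ∀ u v : H,
      Pinv (u + (τ / 2) • v, -((τ / 2) • A u) + v - (τ / 2) • B v) =
        (-u + Qinv ((2:ℝ) • u + τ • B u) + τ • Qinv v,
         (-(4 / τ)) • u + (2 / τ) • Qinv ((2:ℝ) • u + τ • B u) + (-v + (2:ℝ) • Qinv v)) :=
  stmt_12_general A B τ hτ Qinv hQ₂ Pinv hPinv₁
end

section
/- Interpolation–adjoint comparison: with V, Vₕ, Lₕ, Lₕ* as above and Iₕ : Z → Vₕ linear defined on a subspace Z ⊆ V, for any u ∈ Z one has ‖(Lₕ* − Iₕ)u‖_{Vₕ} ≤ C_V‖(I − Lₕ∘Iₕ)u‖_V + sup_{‖ωₕ‖_{Vₕ}=1} |p(Lₕ(Iₕ u), Lₕωₕ) − pₕ(Iₕ u, ωₕ)|. -/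
/-!
Write `a = Iₕ u`. Testing the error `e = Lₕ* u - a` against a unit vector `ω` and using the
adjoint identity splits `⟪e, ω⟫` into `⟪u - Lₕ a, Lₕ ω⟫`, bounded by `C_V ‖u - Lₕ a‖`, plus the
consistency error `⟪Lₕ a, Lₕ ω⟫ - ⟪a, ω⟫`, bounded by the supremum. Taking `ω = e / ‖e‖`
turns `⟪e, ω⟫` into `‖e‖`.
-/

open scoped RealInnerProductSpace

section InnerProduct

variable {E : Type*} [NormedAddCommGroup E] [InnerProductSpace ℝ E]

theorem norm_le_of_forall_sphere_inner_le {e : E} {c : ℝ} (hc : 0 ≤ c)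
    (h : ∀ ω ∈ Metric.sphere (0 : E) 1, ⟪e, ω⟫ ≤ c) : ‖e‖ ≤ c := by
  rcases eq_or_ne e 0 with rfl | he
  · simpa using hc
  have hne : ‖e‖ ≠ 0 := norm_ne_zero_iff.mpr he
  have hunit : ‖e‖⁻¹ • e ∈ Metric.sphere (0 : E) 1 := by
    simp [norm_smul, inv_mul_cancel₀ hne]
  calc ‖e‖ = ⟪e, ‖e‖⁻¹ • e⟫ := by
        rw [real_inner_smul_right, real_inner_self_eq_norm_mul_norm]; field_simp
    _ ≤ c := h _ hunit

end InnerProduct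

section Lift

variable {V Vh : Type*} [NormedAddCommGroup V] [InnerProductSpace ℝ V]
  [NormedAddCommGroup Vh] [InnerProductSpace ℝ Vh]

theorem bddAbove_consistencyError {L : Vh →ₗ[ℝ] V} {CV : ℝ} (hL : ∀ φ : Vh, ‖L φ‖ ≤ CV * ‖φ‖)
    (a : Vh) :
    BddAbove (Set.range fun ω : Metric.sphere (0 : Vh) 1 => |⟪L a, L ω⟫ - ⟪a, ω⟫|) := by
  refine ⟨‖L a‖ * CV + ‖a‖, ?_⟩
  rintro _ ⟨ω, rfl⟩
  have hω : ‖(ω : Vh)‖ = 1 := mem_sphere_zero_iff_norm.mp ω.2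
  calc |⟪L a, L ω⟫ - ⟪a, ω⟫| ≤ |⟪L a, L ω⟫| + |⟪a, ω⟫| := abs_sub _ _
    _ ≤ ‖L a‖ * ‖L ω‖ + ‖a‖ * ‖(ω : Vh)‖ :=
        add_le_add (abs_real_inner_le_norm _ _) (abs_real_inner_le_norm _ _)
    _ ≤ ‖L a‖ * (CV * ‖(ω : Vh)‖) + ‖a‖ * ‖(ω : Vh)‖ := by gcongr; exact hL _
    _ = ‖L a‖ * CV + ‖a‖ := by rw [hω]; ring

theorem inner_adjointLift_sub {L : Vh →ₗ[ℝ] V} {Lstar : V →ₗ[ℝ] Vh}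
    (hLstar : ∀ (v : V) (ω : Vh), ⟪Lstar v, ω⟫ = ⟪v, L ω⟫) (v : V) (a ω : Vh) :
    ⟪Lstar v - a, ω⟫ = ⟪v - L a, L ω⟫ + (⟪L a, L ω⟫ - ⟪a, ω⟫) := by
  rw [inner_sub_left, hLstar, inner_sub_left]
  ring

end Lift

theorem stmt_17_general {V Vh : Type*}
    [NormedAddCommGroup V] [InnerProductSpace ℝ V]
    [NormedAddCommGroup Vh] [InnerProductSpace ℝ Vh]
    (L : Vh →ₗ[ℝ] V) (CV : ℝ) (hCV : 0 < CV)
    (hL : ∀ φ : Vh, ‖L φ‖ ≤ CV * ‖φ‖)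
    (Lstar : V →ₗ[ℝ] Vh)
    (hLstar : ∀ (v : V) (ω : Vh), ⟪Lstar v, ω⟫ = ⟪v, L ω⟫)
    (Z : Submodule ℝ V) (Ih : Z →ₗ[ℝ] Vh) (u : Z) :
    ‖Lstar (u : V) - Ih u‖ ≤
      CV * ‖(u : V) - L (Ih u)‖ +
      ⨆ ω : Metric.sphere (0 : Vh) 1, |⟪L (Ih u), L (ω : Vh)⟫ - ⟪Ih u, (ω : Vh)⟫| := by
  refine norm_le_of_forall_sphere_inner_le
    (add_nonneg (mul_nonneg hCV.le (norm_nonneg _)) (Real.iSup_nonneg fun _ => abs_nonneg _)) fun ω hω => ?_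
  have hLω : ⟪(u : V) - L (Ih u), L ω⟫ ≤ CV * ‖(u : V) - L (Ih u)‖ :=
    calc ⟪(u : V) - L (Ih u), L ω⟫ ≤ ‖(u : V) - L (Ih u)‖ * ‖L ω‖ := real_inner_le_norm _ _
      _ ≤ ‖(u : V) - L (Ih u)‖ * (CV * ‖ω‖) := by gcongr; exact hL ω
      _ = CV * ‖(u : V) - L (Ih u)‖ := by rw [mem_sphere_zero_iff_norm.mp hω]; ring
  have hsup : ⟪L (Ih u), L ω⟫ - ⟪Ih u, ω⟫ ≤
      ⨆ ω : Metric.sphere (0 : Vh) 1, |⟪L (Ih u), L (ω : Vh)⟫ - ⟪Ih u, (ω : Vh)⟫| :=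
    (le_abs_self _).trans (le_ciSup (bddAbove_consistencyError hL (Ih u)) ⟨ω, hω⟩)
  rw [inner_adjointLift_sub hLstar]
  exact add_le_add hLω hsup

/-- interpolation–adjoint comparison. -/
theorem stmt_17 {V Vh : Type*}
    [NormedAddCommGroup V] [InnerProductSpace ℝ V]
    [NormedAddCommGroup Vh] [InnerProductSpace ℝ Vh] [FiniteDimensional ℝ Vh]
    (L : Vh →ₗ[ℝ] V) (CV : ℝ) (hCV : 0 < CV)
    (hL : ∀ φ : Vh, ‖L φ‖ ≤ CV * ‖φ‖)
    (Lstar : V →ₗ[ℝ] Vh)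
    (hLstar : ∀ (v : V) (ω : Vh), ⟪Lstar v, ω⟫ = ⟪v, L ω⟫)
    (Z : Submodule ℝ V) (Ih : Z →ₗ[ℝ] Vh) (u : Z) :
    ‖Lstar (u : V) - Ih u‖ ≤
      CV * ‖(u : V) - L (Ih u)‖ +
      ⨆ ω : Metric.sphere (0 : Vh) 1, |⟪L (Ih u), L (ω : Vh)⟫ - ⟪Ih u, (ω : Vh)⟫| :=
  stmt_17_general L CV hCV hL Lstar hLstar Z Ih u
end
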